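/- arXiv:0912.0213 — 2 statements merged into one kernel-verified Lean document; each statement's English description precedes it below -/
import Mathlib

section
/- Let H be a bimonoid in a braided monoidal category, P a right H-module coalgebra with action ρ : P ⊗ H ⟶ P, B a comonoid, and π : P ⟶ B a comonoid morphism satisfying π ∘ ρ = π ∘ (id_P ⊗ ε_H) (up to unitor). Assume the cotensor product P□_B P exists, with equalizer inclusion ι : P□_B P ⟶ P ⊗ P, and that the functor − ⊗ H (tensoring on the right by H) preserves this equalizer. Then there exists a unique morphism ξ : (P□_B P) ⊗ H ⟶ P□_B P such that ι ∘ ξ = (id_P ⊗ ρ) ∘ (ι ⊗ id_H) (with associators inserted). -/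
open CategoryTheory CategoryTheory.Limits MonoidalCategory

universe v u

variable {𝓒 : Type u} [Category.{v} 𝓒] [MonoidalCategory 𝓒]

/-- The first of the two morphisms `P ⊗ P ⟶ P ⊗ (B ⊗ P)` defining the cotensor product
`P □_B P` of a comonoid morphism `π : P ⟶ B`: `(id_P ⊗ π ⊗ id_P) ∘ (Δ_P ⊗ id_P)`. -/
def cotensorLeg₁ (P B : Comon 𝓒) (π : P ⟶ B) : P.X ⊗ P.X ⟶ P.X ⊗ (B.X ⊗ P.X) :=
  (ComonObj.comul (X := P.X) ▷ P.X) ≫ (α_ P.X P.X P.X).hom ≫ (P.X ◁ (π.hom ▷ P.X))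

/-- The second of the two morphisms `P ⊗ P ⟶ P ⊗ (B ⊗ P)` defining the cotensor product
`P □_B P`: `(id_P ⊗ π ⊗ id_P) ∘ (id_P ⊗ Δ_P)`. -/
def cotensorLeg₂ (P B : Comon 𝓒) (π : P ⟶ B) : P.X ⊗ P.X ⟶ P.X ⊗ (B.X ⊗ P.X) :=
  (P.X ◁ ComonObj.comul (X := P.X)) ≫ (P.X ◁ (π.hom ▷ P.X))

/-! Since `ι` is the equalizer of the two legs, `ξ` exists and is unique as soon as
`(id_P ⊗ ρ) ∘ (ι ⊗ id_H)` equalizes them. For the first leg this is naturality. For the second,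
`ρ` is a comonoid morphism and `π ∘ ρ` discards the `H`-factor through `ε_H`; by the counit law of
`H` this discarding undoes the `H`-half of the comultiplication of `P ⊗ H`, so that
`(π ⊗ id_P) ∘ Δ_P ∘ ρ = (id_B ⊗ ρ) ∘ ((π ⊗ id_P) ∘ Δ_P ⊗ id_H)`. -/

open scoped ComonObj

section Braided
variable [BraidedCategory 𝓒]

theorem tensorObj_comul_whiskerRight_counit (A B : 𝓒) [ComonObj A] [ComonObj B] :
    Δ[A ⊗ B] ≫ ((A ◁ ε[B] ≫ (ρ_ A).hom) ▷ (A ⊗ B)) = (Δ[A] ▷ B) ≫ (α_ A A B).hom := by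
  have discard : A ◁ Δ[B] ≫ (α_ A B B).inv ≫ ((β_ A B).hom ▷ B) ≫ ((ε[B] ▷ A) ▷ B) ≫
      (α_ (𝟙_ 𝓒) A B).hom ≫ (λ_ (A ⊗ B)).hom = 𝟙 (A ⊗ B) := by
    rw [← comp_whiskerRight_assoc, ← BraidedCategory.braiding_naturality_right, comp_whiskerRight_assoc,
      ← associator_inv_naturality_middle_assoc, ← MonoidalCategory.whiskerLeft_comp_assoc,
      ComonObj.counit_comul, braiding_tensorUnit_right]
    monoidal
  calc _ = (Δ[A] ▷ B) ≫ (α_ A A B).hom ≫ A ◁ (A ◁ Δ[B] ≫ (α_ A B B).inv ≫ ((β_ A B).hom ▷ B) ≫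
          ((ε[B] ▷ A) ▷ B) ≫ (α_ (𝟙_ 𝓒) A B).hom ≫ (λ_ (A ⊗ B)).hom) := by
        simp [tensorμ, MonoidalCategory.tensorHom_def]
    _ = (Δ[A] ▷ B) ≫ (α_ A A B).hom := by rw [discard]; simp

theorem action_comp_comul_whiskerRight {P H B : 𝓒} [ComonObj P] [ComonObj H] (ρ : P ⊗ H ⟶ P)
    (hρ : ρ ≫ Δ[P] = Δ[P ⊗ H] ≫ (ρ ⊗ₘ ρ)) (f : P ⟶ B)
    (hf : ρ ≫ f = (P ◁ ε[H]) ≫ (ρ_ P).hom ≫ f) :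
    ρ ≫ Δ[P] ≫ (f ▷ P) = (Δ[P] ▷ H) ≫ ((f ▷ P) ▷ H) ≫ (α_ B P H).hom ≫ (B ◁ ρ) :=
  calc ρ ≫ Δ[P] ≫ (f ▷ P) = Δ[P ⊗ H] ≫ ((ρ ≫ f) ⊗ₘ ρ) := by
        rw [reassoc_of% hρ, tensorHom_comp_whiskerRight]
    _ = Δ[P ⊗ H] ≫ ((P ◁ ε[H] ≫ (ρ_ P).hom) ▷ (P ⊗ H)) ≫ (f ▷ (P ⊗ H)) ≫ (B ◁ ρ) := by
        rw [hf]; simp [MonoidalCategory.tensorHom_def]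
    _ = (Δ[P] ▷ H) ≫ ((f ▷ P) ▷ H) ≫ (α_ B P H).hom ≫ (B ◁ ρ) := by
        rw [reassoc_of% tensorObj_comul_whiskerRight_counit, associator_naturality_left_assoc]

end Braided

section Cotensor

variable {P B : Comon 𝓒} (π : P ⟶ B) {H Q : 𝓒} (ρ : P.X ⊗ H ⟶ P.X)

theorem whiskerRight_action_comp_cotensorLeg₁ (g : Q ⟶ P.X ⊗ P.X) :
    ((g ▷ H) ≫ (α_ P.X P.X H).hom ≫ (P.X ◁ ρ)) ≫ cotensorLeg₁ P B π =
      ((g ≫ cotensorLeg₁ P B π) ▷ H) ≫ (α_ P.X (B.X ⊗ P.X) H).hom ≫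
        (P.X ◁ (α_ B.X P.X H).hom) ≫ (P.X ◁ (B.X ◁ ρ)) := by
  simp only [cotensorLeg₁, comp_whiskerRight, Category.assoc]
  congr 1
  rw [whisker_exchange_assoc, associator_naturality_right_assoc,
    ← MonoidalCategory.whiskerLeft_comp, whisker_exchange, MonoidalCategory.whiskerLeft_comp]
  monoidal

theorem whiskerRight_action_comp_cotensorLeg₂ [BraidedCategory 𝓒] [ComonObj H]
    (hρ : ρ ≫ Δ[P.X] = Δ[P.X ⊗ H] ≫ (ρ ⊗ₘ ρ))
    (hπ : ρ ≫ π.hom = (P.X ◁ ε[H]) ≫ (ρ_ P.X).hom ≫ π.hom) (g : Q ⟶ P.X ⊗ P.X) :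
    ((g ▷ H) ≫ (α_ P.X P.X H).hom ≫ (P.X ◁ ρ)) ≫ cotensorLeg₂ P B π =
      ((g ≫ cotensorLeg₂ P B π) ▷ H) ≫ (α_ P.X (B.X ⊗ P.X) H).hom ≫
        (P.X ◁ (α_ B.X P.X H).hom) ≫ (P.X ◁ (B.X ◁ ρ)) := by
  simp only [cotensorLeg₂, comp_whiskerRight, Category.assoc]
  congr 1
  rw [← MonoidalCategory.whiskerLeft_comp, ← MonoidalCategory.whiskerLeft_comp,
    action_comp_comul_whiskerRight ρ hρ π.hom hπ]
  simp only [MonoidalCategory.whiskerLeft_comp]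
  monoidal

theorem whiskerRight_action_comp_cotensorLeg_eq [BraidedCategory 𝓒] [ComonObj H]
    (hρ : ρ ≫ Δ[P.X] = Δ[P.X ⊗ H] ≫ (ρ ⊗ₘ ρ))
    (hπ : ρ ≫ π.hom = (P.X ◁ ε[H]) ≫ (ρ_ P.X).hom ≫ π.hom) {g : Q ⟶ P.X ⊗ P.X}
    (hg : g ≫ cotensorLeg₁ P B π = g ≫ cotensorLeg₂ P B π) :
    ((g ▷ H) ≫ (α_ P.X P.X H).hom ≫ (P.X ◁ ρ)) ≫ cotensorLeg₁ P B π =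
      ((g ▷ H) ≫ (α_ P.X P.X H).hom ≫ (P.X ◁ ρ)) ≫ cotensorLeg₂ P B π := by
  rw [whiskerRight_action_comp_cotensorLeg₁, hg, whiskerRight_action_comp_cotensorLeg₂ π ρ hρ hπ]

end Cotensor

theorem exists_unique_cotensor_action_general [BraidedCategory 𝓒]
    (H : Bimon 𝓒) (P B : Comon 𝓒) (ρ : P.X ⊗ H.X.X ⟶ P.X)
    -- `ρ` is a comonoid morphism from the tensor-product comonoid `P ⊗ H` to `P`:
    (hρ_comul : ρ ≫ ComonObj.comul (X := P.X) =
      ((ComonObj.comul (X := P.X) ⊗ₘ (ComonObj.comul (self := H.comon)).hom) ≫ tensorμ P.X P.X H.X.X H.X.X) ≫ (ρ ⊗ₘ ρ))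
    (π : P ⟶ B)
    (hπ : ρ ≫ π.hom = (P.X ◁ (ComonObj.counit (self := H.comon)).hom) ≫ (ρ_ P.X).hom ≫ π.hom)
    (Q : 𝓒) (ι : Q ⟶ P.X ⊗ P.X)
    (hι : ι ≫ cotensorLeg₁ P B π = ι ≫ cotensorLeg₂ P B π)
    (hlim : IsLimit (Fork.ofι ι hι)) :
    ∃! ξ : Q ⊗ H.X.X ⟶ Q,
      ξ ≫ ι = (ι ▷ H.X.X) ≫ (α_ P.X P.X H.X.X).hom ≫ (P.X ◁ ρ) :=
  Fork.IsLimit.existsUnique hlim _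
    (whiskerRight_action_comp_cotensorLeg_eq π ρ (by rw [Comon.tensorObj_comul]; exact hρ_comul) hπ hι)

/-- `H` a bimonoid in a braided monoidal category, `P` a right `H`-module
coalgebra with action `ρ`, `B` a comonoid, `π : P ⟶ B` a comonoid morphism with
`π ∘ ρ = π ∘ (id_P ⊗ ε_H)` (up to unitor).  If the cotensor product `P □_B P` exists
(equalizer inclusion `ι`) and `− ⊗ H` preserves this equalizer, then there is a unique
morphism `ξ : (P □_B P) ⊗ H ⟶ P □_B P` with `ι ∘ ξ = (id_P ⊗ ρ) ∘ (ι ⊗ id_H)`. -/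
theorem exists_unique_cotensor_action [BraidedCategory 𝓒]
    (H : Bimon 𝓒) (P B : Comon 𝓒) (ρ : P.X ⊗ H.X.X ⟶ P.X)
    -- `ρ` is a unital, associative action of the monoid `H`:
    (hact_one : (P.X ◁ MonObj.one (X := H.X.X)) ≫ ρ = (ρ_ P.X).hom)
    (hact_assoc : (ρ ▷ H.X.X) ≫ ρ = (α_ P.X H.X.X H.X.X).hom ≫ (P.X ◁ MonObj.mul (X := H.X.X)) ≫ ρ)
    -- `ρ` is a comonoid morphism from the tensor-product comonoid `P ⊗ H` to `P`:
    (hρ_comul : ρ ≫ ComonObj.comul (X := P.X) =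
      ((ComonObj.comul (X := P.X) ⊗ₘ (ComonObj.comul (self := H.comon)).hom) ≫ tensorμ P.X P.X H.X.X H.X.X) ≫ (ρ ⊗ₘ ρ))
    (hρ_counit : ρ ≫ ComonObj.counit (X := P.X) = (ComonObj.counit (X := P.X) ⊗ₘ (ComonObj.counit (self := H.comon)).hom) ≫ (λ_ (𝟙_ 𝓒)).hom)
    (π : P ⟶ B)
    (hπ : ρ ≫ π.hom = (P.X ◁ (ComonObj.counit (self := H.comon)).hom) ≫ (ρ_ P.X).hom ≫ π.hom)
    (Q : 𝓒) (ι : Q ⟶ P.X ⊗ P.X)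
    (hι : ι ≫ cotensorLeg₁ P B π = ι ≫ cotensorLeg₂ P B π)
    (hlim : IsLimit (Fork.ofι ι hι))
    [PreservesLimit (parallelPair (cotensorLeg₁ P B π) (cotensorLeg₂ P B π))
      (tensorRight H.X.X)] :
    ∃! ξ : Q ⊗ H.X.X ⟶ Q,
      ξ ≫ ι = (ι ▷ H.X.X) ≫ (α_ P.X P.X H.X.X).hom ≫ (P.X ◁ ρ) :=
  exists_unique_cotensor_action_general H P B ρ hρ_comul π hπ Q ι hι hlim
end

section
/- Let H be a bimonoid in a braided monoidal category, P a right H-module coalgebra with action ρ : P ⊗ H ⟶ P, B a comonoid, and π : P ⟶ B a comonoid morphism satisfying π ∘ ρ = π ∘ (id_P ⊗ ε_H) (up to unitor). Assume the cotensor product P□_B P exists, with equalizer inclusion ι : P□_B P ⟶ P ⊗ P, and that the functor − ⊗ H preserves this equalizer. Let can : P ⊗ H ⟶ P□_B P be the unique morphism with ι ∘ can = (id_P ⊗ ρ) ∘ (Δ_P ⊗ id_H), and let ξ : (P□_B P) ⊗ H ⟶ P□_B P be the unique morphism with ι ∘ ξ = (id_P ⊗ ρ) ∘ (ι ⊗ id_H).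 Then can is right H-linear: can ∘ (id_P ⊗ m_H) = ξ ∘ (can ⊗ id_H) as morphisms P ⊗ H ⊗ H ⟶ P□_B P (with associators inserted). -/
open CategoryTheory CategoryTheory.Limits MonoidalCategory

universe v u

variable {𝓒 : Type u} [Category.{v} 𝓒] [MonoidalCategory 𝓒]

/-- `(f ▷ M) ≫ α ≫ (Y ◁ ρ)` is a morphism of right `M`-modules from the free module `X ⊗ M`
to `Y ⊗ P`. -/
theorem whiskerLeft_act_right_linear {M X Y P : 𝓒} [MonObj M] (ρ : P ⊗ M ⟶ P)
    (hρ : (ρ ▷ M) ≫ ρ = (α_ P M M).hom ≫ (P ◁ MonObj.mul) ≫ ρ) (f : X ⟶ Y ⊗ P) :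
    (α_ X M M).hom ≫ (X ◁ MonObj.mul) ≫ (f ▷ M) ≫ (α_ Y P M).hom ≫ (Y ◁ ρ) =
      (((f ▷ M) ≫ (α_ Y P M).hom ≫ (Y ◁ ρ)) ▷ M) ≫ (α_ Y P M).hom ≫ (Y ◁ ρ) := by
  have hρ' : (P ◁ MonObj.mul) ≫ ρ = (α_ P M M).inv ≫ (ρ ▷ M) ≫ ρ := by simp [hρ]
  rw [whisker_exchange_assoc, associator_naturality_right_assoc,
    ← MonoidalCategory.whiskerLeft_comp, hρ']
  monoidal

theorem can_right_linear_general [BraidedCategory 𝓒]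
    (H : Bimon 𝓒) (P B : Comon 𝓒) (ρ : P.X ⊗ H.X.X ⟶ P.X)
    -- `ρ` is a unital, associative action of the monoid `H`:
    (hact_assoc : (ρ ▷ H.X.X) ≫ ρ = (α_ P.X H.X.X H.X.X).hom ≫ (P.X ◁ MonObj.mul (X := H.X.X)) ≫ ρ)
    (π : P ⟶ B)
    (Q : 𝓒) (ι : Q ⟶ P.X ⊗ P.X)
    (hι : ι ≫ cotensorLeg₁ P B π = ι ≫ cotensorLeg₂ P B π)
    (hlim : IsLimit (Fork.ofι ι hι))
    (can : P.X ⊗ H.X.X ⟶ Q)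
    (hcan : can ≫ ι = (ComonObj.comul (X := P.X) ▷ H.X.X) ≫ (α_ P.X P.X H.X.X).hom ≫ (P.X ◁ ρ))
    (ξ : Q ⊗ H.X.X ⟶ Q)
    (hξ : ξ ≫ ι = (ι ▷ H.X.X) ≫ (α_ P.X P.X H.X.X).hom ≫ (P.X ◁ ρ)) :
    (α_ P.X H.X.X H.X.X).hom ≫ (P.X ◁ MonObj.mul (X := H.X.X)) ≫ can = (can ▷ H.X.X) ≫ ξ := by
  refine Fork.IsLimit.hom_ext hlim ?_
  simp only [Fork.ι_ofι, Category.assoc, hcan, hξ, ← comp_whiskerRight_assoc]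
  exact whiskerLeft_act_right_linear ρ hact_assoc ComonObj.comul

/-- `H` a bimonoid in a braided monoidal category, `P` a right `H`-module
coalgebra with action `ρ`, `B` a comonoid, `π : P ⟶ B` a comonoid morphism with
`π ∘ ρ = π ∘ (id_P ⊗ ε_H)`.  Assume the cotensor product `P □_B P` exists (equalizer
inclusion `ι`) and `− ⊗ H` preserves this equalizer.  If `can : P ⊗ H ⟶ P □_B P` is
the unique morphism with `ι ∘ can = (id_P ⊗ ρ) ∘ (Δ_P ⊗ id_H)` and
`ξ : (P □_B P) ⊗ H ⟶ P □_B P` the unique morphism with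
`ι ∘ ξ = (id_P ⊗ ρ) ∘ (ι ⊗ id_H)`, then `can` is right `H`-linear:
`can ∘ (id_P ⊗ m_H) = ξ ∘ (can ⊗ id_H)` (with associators inserted). -/
theorem can_right_linear [BraidedCategory 𝓒]
    (H : Bimon 𝓒) (P B : Comon 𝓒) (ρ : P.X ⊗ H.X.X ⟶ P.X)
    -- `ρ` is a unital, associative action of the monoid `H`:
    (hact_one : (P.X ◁ MonObj.one (X := H.X.X)) ≫ ρ = (ρ_ P.X).hom)
    (hact_assoc : (ρ ▷ H.X.X) ≫ ρ = (α_ P.X H.X.X H.X.X).hom ≫ (P.X ◁ MonObj.mul (X := H.X.X)) ≫ ρ)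
    -- `ρ` is a comonoid morphism from the tensor-product comonoid `P ⊗ H` to `P`:
    (hρ_comul : ρ ≫ ComonObj.comul (X := P.X) =
      ((ComonObj.comul (X := P.X) ⊗ₘ (@ComonObj.comul _ _ _ H.X H.comon).hom) ≫ tensorμ P.X P.X H.X.X H.X.X) ≫ (ρ ⊗ₘ ρ))
    (hρ_counit : ρ ≫ ComonObj.counit (X := P.X) = (ComonObj.counit (X := P.X) ⊗ₘ (@ComonObj.counit _ _ _ H.X H.comon).hom) ≫ (λ_ (𝟙_ 𝓒)).hom)
    (π : P ⟶ B)
    (hπ : ρ ≫ π.hom = (P.X ◁ (@ComonObj.counit _ _ _ H.X H.comon).hom) ≫ (ρ_ P.X).hom ≫ π.hom)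
    (Q : 𝓒) (ι : Q ⟶ P.X ⊗ P.X)
    (hι : ι ≫ cotensorLeg₁ P B π = ι ≫ cotensorLeg₂ P B π)
    (hlim : IsLimit (Fork.ofι ι hι))
    [PreservesLimit (parallelPair (cotensorLeg₁ P B π) (cotensorLeg₂ P B π))
      (tensorRight H.X.X)]
    (can : P.X ⊗ H.X.X ⟶ Q)
    (hcan : can ≫ ι = (ComonObj.comul (X := P.X) ▷ H.X.X) ≫ (α_ P.X P.X H.X.X).hom ≫ (P.X ◁ ρ))
    (ξ : Q ⊗ H.X.X ⟶ Q)
    (hξ : ξ ≫ ι = (ι ▷ H.X.X) ≫ (α_ P.X P.X H.X.X).hom ≫ (P.X ◁ ρ)) :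
    (α_ P.X H.X.X H.X.X).hom ≫ (P.X ◁ MonObj.mul (X := H.X.X)) ≫ can = (can ▷ H.X.X) ≫ ξ :=
  can_right_linear_general H P B ρ hact_assoc π Q ι hι hlim can hcan ξ hξ
end
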